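/- (Time derivative of the squared geodesic distance) Let R : ℝ → ℝ^{3×3} be a curve with R(t) ∈ SO(3) and θ(R(t)) ∈ (0, π) for all t, and suppose R has derivative R' at t₀. Then the function t ↦ (1/2)‖(Log(R(t)))^∨‖₂² is differentiable at t₀ with derivative ⟨(Log(R(t₀)))^∨, (R(t₀)ᵀ R')^∨⟩. -/

import Mathlib

open Matrix Real RealInnerProductSpace

/-- The vee map, inverse of the hat map on skew-symmetric matrices. -/
def vee (S : Matrix (Fin 3) (Fin 3) ℝ) : EuclideanSpace ℝ (Fin 3) :=
  WithLp.toLp 2 ![S 2 1, S 0 2, S 1 0]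

/-- `SO(3)`: real 3×3 matrices `R` with `RᵀR = I` and `det R = 1`. -/
def SO3 (R : Matrix (Fin 3) (Fin 3) ℝ) : Prop :=
  Rᵀ * R = 1 ∧ R.det = 1

/-- The rotation angle `θ(R) = arccos((tr(R) − 1)/2)`. -/
noncomputable def rotAngle (R : Matrix (Fin 3) (Fin 3) ℝ) : ℝ :=
  Real.arccos ((Matrix.trace R - 1) / 2)

/-- The matrix logarithm `Log(R) = (θ/(2 sin θ))(R − Rᵀ)` for `θ ≠ 0`, and `0` for `θ = 0`. -/
noncomputable def matLog (R : Matrix (Fin 3) (Fin 3) ℝ) : Matrix (Fin 3) (Fin 3) ℝ :=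
  if rotAngle R = 0 then 0
  else (rotAngle R / (2 * Real.sin (rotAngle R))) • (R - Rᵀ)

/-! The squared norm of `(Log R)^∨` is `θ(R)²`, because `‖(R − Rᵀ)^∨‖² = 4 sin² θ(R)` on `SO(3)`.
So the function is `θ(R(t))²/2`, and since `θ = arccos((tr R − 1)/2)` its derivative is
`−θ tr R' / (2 sin θ)`. On the other side, `Ω = R(t₀)ᵀ R'` is skew-symmetric (differentiate
`RᵀR = I`), and for skew `Ω` one has `⟨(A − Aᵀ)^∨, Ω^∨⟩ = −tr(AΩ)`; with `A = R(t₀)` this is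
`−tr R'`. -/

lemma vee_smul (c : ℝ) (S : Matrix (Fin 3) (Fin 3) ℝ) : vee (c • S) = c • vee S := by
  ext i
  fin_cases i <;> simp [vee]

lemma inner_vee_sub_transpose_vee {A Ω : Matrix (Fin 3) (Fin 3) ℝ} (hΩ : Ωᵀ = -Ω) :
    ⟪vee (A - Aᵀ), vee Ω⟫ = -trace (A * Ω) := by
  have hskew : ∀ a b, Ω b a = -Ω a b := fun a b => congrFun (congrFun hΩ a) b
  simp only [vee, PiLp.inner_apply, RCLike.inner_apply, conj_trivial,
    Fin.sum_univ_three, Matrix.sub_apply, Matrix.transpose_apply, Matrix.cons_val_zero,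
    Matrix.cons_val_one, Matrix.cons_val_two, Matrix.head_cons, Matrix.tail_cons,
    Matrix.trace_fin_three, Matrix.mul_apply, hskew 1 2, hskew 2 0, hskew 0 1]
  linear_combination (A 0 0 / 2) * hskew 0 0 + (A 1 1 / 2) * hskew 1 1 + (A 2 2 / 2) * hskew 2 2

lemma SO3.adjugate_eq_transpose {M : Matrix (Fin 3) (Fin 3) ℝ} (hM : SO3 M) :
    adjugate M = Mᵀ := by
  calc adjugate M = (Mᵀ * M) * adjugate M := by rw [hM.1, Matrix.one_mul]
    _ = Mᵀ := by rw [Matrix.mul_assoc, Matrix.mul_adjugate, hM.2, one_smul, Matrix.mul_one]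

lemma SO3.norm_vee_sub_transpose_sq {M : Matrix (Fin 3) (Fin 3) ℝ} (hM : SO3 M) :
    ‖vee (M - Mᵀ)‖ ^ 2 = 4 - (trace M - 1) ^ 2 := by
  have hadj := hM.adjugate_eq_transpose
  rw [adjugate_fin_three] at hadj
  -- the diagonal cofactors of `M` are its diagonal entries
  have h00 : M 1 1 * M 2 2 - M 1 2 * M 2 1 = M 0 0 := by simpa using congrFun (congrFun hadj 0) 0
  have h11 : M 0 0 * M 2 2 - M 0 2 * M 2 0 = M 1 1 := by simpa using congrFun (congrFun hadj 1) 1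
  have h22 : M 0 0 * M 1 1 - M 0 1 * M 1 0 = M 2 2 := by simpa using congrFun (congrFun hadj 2) 2
  have hcol : ∀ j : Fin 3, M 0 j ^ 2 + M 1 j ^ 2 + M 2 j ^ 2 = 1 := by
    intro j
    have := congrFun (congrFun hM.1 j) j
    simp only [Matrix.mul_apply, Matrix.transpose_apply, Fin.sum_univ_three,
      Matrix.one_apply_eq] at this
    linear_combination this
  rw [← real_inner_self_eq_norm_sq, trace_fin_three]
  simp only [vee, PiLp.inner_apply, RCLike.inner_apply, conj_trivial,
    Fin.sum_univ_three, Matrix.sub_apply, Matrix.transpose_apply, Matrix.cons_val_zero,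
    Matrix.cons_val_one, Matrix.cons_val_two, Matrix.head_cons, Matrix.tail_cons]
  linear_combination hcol 0 + hcol 1 + hcol 2 + 2 * h00 + 2 * h11 + 2 * h22

lemma SO3.sin_rotAngle_sq {M : Matrix (Fin 3) (Fin 3) ℝ} (hM : SO3 M) :
    4 * sin (rotAngle M) ^ 2 = ‖vee (M - Mᵀ)‖ ^ 2 := by
  have hnorm := hM.norm_vee_sub_transpose_sq
  have hc : (trace M - 1) ^ 2 ≤ 4 := by nlinarith [sq_nonneg ‖vee (M - Mᵀ)‖]
  rw [rotAngle, sin_arccos, sq_sqrt (by nlinarith), hnorm]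
  ring

lemma SO3.norm_vee_matLog_sq {M : Matrix (Fin 3) (Fin 3) ℝ} (hM : SO3 M) (hπ : rotAngle M ≠ π) :
    ‖vee (matLog M)‖ ^ 2 = rotAngle M ^ 2 := by
  by_cases h0 : rotAngle M = 0
  · simp [matLog, h0, vee]
  have hsin : sin (rotAngle M) ≠ 0 :=
    (sin_pos_of_pos_of_lt_pi ((arccos_nonneg _).lt_of_ne' h0) ((arccos_le_pi _).lt_of_ne hπ)).ne'
  rw [matLog, if_neg h0, vee_smul, norm_smul, mul_pow, ← hM.sin_rotAngle_sq, norm_eq_abs, sq_abs]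
  field_simp
  norm_num

lemma hasDerivAt_trace {n : Type*} [Fintype n] {R : ℝ → Matrix n n ℝ} {R' : Matrix n n ℝ} {t₀ : ℝ}
    (hderiv : ∀ a b, HasDerivAt (fun t => R t a b) (R' a b) t₀) :
    HasDerivAt (fun t => trace (R t)) (trace R') t₀ :=
  HasDerivAt.fun_sum fun i _ => hderiv i i

lemma hasDerivAt_rotAngle {R : ℝ → Matrix (Fin 3) (Fin 3) ℝ} {R' : Matrix (Fin 3) (Fin 3) ℝ}
    {t₀ : ℝ} (hderiv : ∀ a b, HasDerivAt (fun t => R t a b) (R' a b) t₀)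
    (hθ : rotAngle (R t₀) ∈ Set.Ioo 0 π) :
    HasDerivAt (fun t => rotAngle (R t)) (-trace R' / (2 * sin (rotAngle (R t₀)))) t₀ := by
  have hne_one : (trace (R t₀) - 1) / 2 ≠ 1 := fun h => hθ.1.ne' (arccos_eq_zero.mpr h.ge)
  have hne_neg_one : (trace (R t₀) - 1) / 2 ≠ -1 := fun h => hθ.2.ne (arccos_eq_pi.mpr h.le)
  have hcos := ((hasDerivAt_trace hderiv).sub_const 1).div_const 2
  refine ((hasDerivAt_arccos hne_neg_one hne_one).comp t₀ hcos).congr_deriv ?_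
  rw [rotAngle, sin_arccos]
  field_simp

lemma transpose_transpose_mul_deriv_eq_neg {n : Type*} [Fintype n] [DecidableEq n]
    {R : ℝ → Matrix n n ℝ} {R' : Matrix n n ℝ} {t₀ : ℝ} (hR : ∀ t, (R t)ᵀ * R t = 1)
    (hderiv : ∀ a b, HasDerivAt (fun t => R t a b) (R' a b) t₀) :
    ((R t₀)ᵀ * R')ᵀ = -((R t₀)ᵀ * R') := by
  ext a b
  have hprod : HasDerivAt (fun t => ∑ k, R t k a * R t k b)
      (∑ k, (R' k a * R t₀ k b + R t₀ k a * R' k b)) t₀ :=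
    HasDerivAt.fun_sum fun k _ => (hderiv k a).mul (hderiv k b)
  have hconst : (fun t => ∑ k, R t k a * R t k b) = fun _ => (1 : Matrix n n ℝ) a b := by
    funext t
    simpa only [Matrix.mul_apply, Matrix.transpose_apply] using congrFun (congrFun (hR t) a) b
  rw [hconst] at hprod
  have hzero := hprod.unique (hasDerivAt_const t₀ _)
  simp only [Matrix.transpose_apply, Matrix.neg_apply, Matrix.mul_apply, Finset.sum_add_distrib]
    at hzero ⊢
  simp only [mul_comm (R' _ a)] at hzero
  linear_combination hzero

/-- (Time derivative of the squared geodesic distance.) If `R : ℝ → ℝ^{3×3}` takes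
values in `SO(3)` with `θ(R(t)) ∈ (0, π)` for all `t`, and `R` has (entrywise)
derivative `R'` at `t₀`, then `t ↦ (1/2)‖(Log R(t))^∨‖²` is differentiable at `t₀`
with derivative `⟨(Log R(t₀))^∨, (R(t₀)ᵀ R')^∨⟩`. -/
theorem hasDerivAt_half_sq_geodesic (R : ℝ → Matrix (Fin 3) (Fin 3) ℝ)
    (hR : ∀ t, SO3 (R t)) (hθ : ∀ t, rotAngle (R t) ∈ Set.Ioo 0 π)
    (t₀ : ℝ) (R' : Matrix (Fin 3) (Fin 3) ℝ)
    (hderiv : ∀ a b, HasDerivAt (fun t => R t a b) (R' a b) t₀) :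
    HasDerivAt (fun t => (1 / 2 : ℝ) * ‖vee (matLog (R t))‖ ^ 2)
      ⟪vee (matLog (R t₀)), vee ((R t₀)ᵀ * R')⟫ t₀ := by
  have hfun : (fun t => (1 / 2 : ℝ) * ‖vee (matLog (R t))‖ ^ 2)
      = fun t => (1 / 2 : ℝ) * rotAngle (R t) ^ 2 := by
    funext t
    rw [(hR t).norm_vee_matLog_sq (hθ t).2.ne]
  have hskew := transpose_transpose_mul_deriv_eq_neg (fun t => (hR t).1) hderiv
  have htrace : trace (R t₀ * ((R t₀)ᵀ * R')) = trace R' := by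
    rw [← Matrix.mul_assoc, mul_eq_one_comm.mp (hR t₀).1, Matrix.one_mul]
  have hsin : sin (rotAngle (R t₀)) ≠ 0 := (sin_pos_of_pos_of_lt_pi (hθ t₀).1 (hθ t₀).2).ne'
  have hinner : ⟪vee (matLog (R t₀)), vee ((R t₀)ᵀ * R')⟫
      = 1 / 2 * (2 * rotAngle (R t₀) * (-trace R' / (2 * sin (rotAngle (R t₀))))) := by
    rw [matLog, if_neg (hθ t₀).1.ne', vee_smul, real_inner_smul_left,
      inner_vee_sub_transpose_vee hskew, htrace]
    field_simp
  rw [hfun, hinner]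
  simpa using ((hasDerivAt_rotAngle hderiv (hθ t₀)).pow 2).const_mul (1 / 2 : ℝ)
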